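/- (Theorem 2.2(ii).) Under Assumption 2.1, fix 1 ≤ a ≤ p and let P_a be the orthogonal projection onto the closed linear span of {x_{(s,c)} : s ∈ ℤ, c ≠ a}. Write ρ^{(a,a)|−a}_{t,τ} = ⟨x_{(t,a)} − P_a x_{(t,a)}, x_{(τ,a)} − P_a x_{(τ,a)}⟩. Then the block D_{a,a} is Toeplitz if and only if ρ^{(a,a)|−a}_{t,τ} = ρ^{(a,a)|−a}_{0,t−τ} for all t, τ ∈ ℤ. -/

import Mathlib

open scoped InnerProductSpace

noncomputable section

abbrev Ell2p (p : ℕ) : Type := lp (fun _ : ℤ × Fin p => ℝ) 2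

noncomputable def e2p (p : ℕ) (i : ℤ × Fin p) : Ell2p p := lp.single 2 i 1

abbrev Ell2Z : Type := lp (fun _ : ℤ => ℝ) 2

noncomputable def eZ (t : ℤ) : Ell2Z := lp.single 2 t 1

def gramQuadSet {H : Type*} [NormedAddCommGroup H] [InnerProductSpace ℝ H]
    {p : ℕ} (x : ℤ × Fin p → H) : Set ℝ :=
  {r : ℝ | ∃ v : (ℤ × Fin p) →₀ ℝ,
      (∑ i ∈ v.support, (v i) ^ 2) = 1 ∧ ‖∑ i ∈ v.support, v i • x i‖ ^ 2 = r}

def IsResidual {H : Type*} [NormedAddCommGroup H] [InnerProductSpace ℝ H]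
    (S : Set H) (y r : H) : Prop :=
  (y - r) ∈ (Submodule.span ℝ S).topologicalClosure ∧ ∀ z ∈ S, ⟪r, z⟫_ℝ = 0


open Filter Topology
open scoped ENNReal

set_option linter.unusedSectionVars false
set_option linter.unusedVariables false
set_option maxHeartbeats 1000000

section Aux
variable {H : Type*} [NormedAddCommGroup H] [InnerProductSpace ℝ H] [CompleteSpace H]

lemma orth_closure {y : H} {s : Set H} (h : ∀ z ∈ s, ⟪y, z⟫_ℝ = 0) :
    ∀ z ∈ (Submodule.span ℝ s).topologicalClosure, ⟪y, z⟫_ℝ = 0 := by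
  intro z hz
  have hker : (Submodule.span ℝ s).topologicalClosure ≤ LinearMap.ker (innerSL ℝ y : H →ₗ[ℝ] ℝ) := by
    apply Submodule.topologicalClosure_minimal
    · rw [Submodule.span_le]
      intro w hw
      simpa [LinearMap.mem_ker] using h w hw
    · exact ContinuousLinearMap.isClosed_ker (innerSL ℝ y)
  simpa [LinearMap.mem_ker] using hker hz

lemma expand_inner_sum (f g : ℤ → H) (c d : ℤ →₀ ℝ) :
    ⟪c.sum fun s v => v • f s, d.sum fun s v => v • g s⟫_ℝ
      = ∑ s ∈ c.support, ∑ u ∈ d.support, c s * d u * ⟪f s, g u⟫_ℝ := by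
  rw [Finsupp.sum, Finsupp.sum, sum_inner]
  refine Finset.sum_congr rfl fun s _ => ?_
  rw [inner_sum]
  refine Finset.sum_congr rfl fun u _ => ?_
  rw [real_inner_smul_left, real_inner_smul_right]; ring

lemma aux_shift (y r : ℤ → H)
    (hY : ∀ t τ : ℤ, ⟪y t, y τ⟫_ℝ = ⟪y (t + 1), y (τ + 1)⟫_ℝ)
    (hbi : ∀ s t : ℤ, ⟪y s, r t⟫_ℝ = if s = t then 1 else 0)
    (hmem : ∀ t : ℤ, r t ∈ (Submodule.span ℝ (Set.range y)).topologicalClosure) :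
    ∀ t τ : ℤ, ⟪r t, r τ⟫_ℝ = ⟪r (t + 1), r (τ + 1)⟫_ℝ := by
  set S : (ℤ →₀ ℝ) → H := fun c => c.sum fun s v => v • y s with hS
  set S' : (ℤ →₀ ℝ) → H := fun c => c.sum fun s v => v • y (s + 1) with hS'
  have gram : ∀ c d : ℤ →₀ ℝ, ⟪S' c, S' d⟫_ℝ = ⟪S c, S d⟫_ℝ := by
    intro c d
    rw [hS, hS', expand_inner_sum, expand_inner_sum]
    refine Finset.sum_congr rfl fun s _ => Finset.sum_congr rfl fun u _ => ?_
    rw [← hY]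
  have Ssub : ∀ (f : ℤ → H) (c d : ℤ →₀ ℝ),
      ((c - d).sum fun s v => v • f s) = (c.sum fun s v => v • f s) - (d.sum fun s v => v • f s) := by
    intro f c d
    apply Finsupp.sum_sub_index
    intro a b₁ b₂; rw [sub_smul]
  have normeq : ∀ c d : ℤ →₀ ℝ, ‖S' c - S' d‖ = ‖S c - S d‖ := by
    intro c d
    have h1 : S' c - S' d = S' (c - d) := (Ssub (fun s => y (s + 1)) c d).symm
    have h2 : S c - S d = S (c - d) := (Ssub y c d).symm
    rw [h1, h2]
    have e1 : ‖S' (c - d)‖ ^ 2 = ‖S (c - d)‖ ^ 2 := by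
      rw [← real_inner_self_eq_norm_sq, ← real_inner_self_eq_norm_sq, gram]
    nlinarith [norm_nonneg (S' (c - d)), norm_nonneg (S (c - d))]
  have spanmem' : ∀ c : ℤ →₀ ℝ, S' c ∈ Submodule.span ℝ (Set.range y) := by
    intro c
    refine Submodule.sum_mem _ fun s _ => Submodule.smul_mem _ _ (Submodule.subset_span ⟨s + 1, rfl⟩)
  -- key claim
  have key : ∀ t : ℤ, ∃ c : ℕ → (ℤ →₀ ℝ),
      Tendsto (fun n => S (c n)) atTop (𝓝 (r t)) ∧
      Tendsto (fun n => S' (c n)) atTop (𝓝 (r (t + 1))) := by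
    intro t
    have hrt : r t ∈ closure (Submodule.span ℝ (Set.range y) : Set H) := hmem t
    obtain ⟨u, hu1, hu2⟩ := mem_closure_iff_seq_limit.1 hrt
    have hc : ∀ n, ∃ c : ℤ →₀ ℝ, S c = u n := by
      intro n
      exact Finsupp.mem_span_range_iff_exists_finsupp.1 (hu1 n)
    choose c hcu using hc
    refine ⟨c, by simpa [hcu] using hu2, ?_⟩
    have hcauchy : CauchySeq fun n => S' (c n) := by
      have h0 : CauchySeq fun n => S (c n) := by
        simp only [hcu]; exact hu2.cauchySeq
      rw [Metric.cauchySeq_iff] at h0 ⊢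
      intro ε hε
      obtain ⟨N, hN⟩ := h0 ε hε
      exact ⟨N, fun m hm n hn => by
        have := hN m hm n hn
        rwa [dist_eq_norm, normeq, ← dist_eq_norm]⟩
    obtain ⟨w, hw⟩ := cauchySeq_tendsto_of_complete hcauchy
    -- identify w with r (t+1)
    have hinner : ∀ s : ℤ, ⟪y s, w⟫_ℝ = ⟪y s, r (t + 1)⟫_ℝ := by
      intro s
      have h1 : Tendsto (fun n => ⟪y s, S' (c n)⟫_ℝ) atTop (𝓝 ⟪y s, w⟫_ℝ) :=
        (tendsto_const_nhds.inner hw)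
      have h2 : ∀ n, ⟪y s, S' (c n)⟫_ℝ = ⟪y (s - 1), S (c n)⟫_ℝ := by
        intro n
        rw [hS, hS']
        simp only [Finsupp.sum]
        rw [inner_sum, inner_sum]
        refine Finset.sum_congr rfl fun u _ => ?_
        rw [real_inner_smul_right, real_inner_smul_right]
        have := hY (s - 1) u
        rw [sub_add_cancel] at this
        rw [← this]
      have h3 : Tendsto (fun n => ⟪y (s - 1), S (c n)⟫_ℝ) atTop (𝓝 ⟪y (s - 1), r t⟫_ℝ) := by
        have : Tendsto (fun n => S (c n)) atTop (𝓝 (r t)) := by simpa [hcu] using hu2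
        exact tendsto_const_nhds.inner this
      have h4 : ⟪y s, w⟫_ℝ = ⟪y (s - 1), r t⟫_ℝ := by
        refine tendsto_nhds_unique h1 ?_
        simpa only [← h2] using h3
      rw [h4, hbi, hbi]
      congr 1
      simp only [eq_iff_iff]
      omega
    have hwM : w ∈ (Submodule.span ℝ (Set.range y)).topologicalClosure := by
      have : w ∈ closure (Submodule.span ℝ (Set.range y) : Set H) :=
        mem_closure_of_tendsto hw (Eventually.of_forall fun n => spanmem' (c n))
      exact this
    have hd : w - r (t + 1) = 0 := by
      have hdM : w - r (t + 1) ∈ (Submodule.span ℝ (Set.range y)).topologicalClosure :=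
        Submodule.sub_mem _ hwM (hmem (t + 1))
      have horth : ∀ z ∈ Set.range y, ⟪w - r (t + 1), z⟫_ℝ = 0 := by
        rintro z ⟨s, rfl⟩
        have h5 := hinner s
        rw [real_inner_comm w (y s), real_inner_comm (r (t + 1)) (y s)] at h5
        rw [inner_sub_left, h5, sub_self]
      have := orth_closure horth _ hdM
      rwa [inner_self_eq_zero] at this
    have hweq : w = r (t + 1) := sub_eq_zero.mp hd
    exact hweq ▸ hw
  intro t τ
  obtain ⟨c, hc1, hc2⟩ := key t
  obtain ⟨d, hd1, hd2⟩ := key τ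
  have h1 : Tendsto (fun n => ⟪S (c n), S (d n)⟫_ℝ) atTop (𝓝 ⟪r t, r τ⟫_ℝ) := hc1.inner hd1
  have h2 : Tendsto (fun n => ⟪S' (c n), S' (d n)⟫_ℝ) atTop (𝓝 ⟪r (t + 1), r (τ + 1)⟫_ℝ) :=
    hc2.inner hd2
  refine tendsto_nhds_unique ?_ h2
  simpa only [gram] using h1


lemma aux_shift_all (r : ℤ → H)
    (h : ∀ t τ : ℤ, ⟪r t, r τ⟫_ℝ = ⟪r (t + 1), r (τ + 1)⟫_ℝ) :
    ∀ t τ : ℤ, ⟪r t, r τ⟫_ℝ = ⟪r 0, r (t - τ)⟫_ℝ := by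
  have hk : ∀ k t τ : ℤ, ⟪r (t + k), r (τ + k)⟫_ℝ = ⟪r t, r τ⟫_ℝ := by
    intro k
    induction k using Int.induction_on with
    | zero => simp
    | succ k ih =>
      intro t τ
      have e1 : t + ((k : ℤ) + 1) = (t + k) + 1 := by ring
      have e2 : τ + ((k : ℤ) + 1) = (τ + k) + 1 := by ring
      rw [e1, e2, ← h, ih]
    | pred k ih =>
      intro t τ
      have key : ∀ s σ : ℤ, ⟪r (s - 1), r (σ - 1)⟫_ℝ = ⟪r s, r σ⟫_ℝ := by
        intro s σ
        have := h (s - 1) (σ - 1)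
        rw [sub_add_cancel, sub_add_cancel] at this
        exact this
      have e3 : t + (-(k : ℤ) - 1) = (t + -(k : ℤ)) - 1 := by ring
      have e4 : τ + (-(k : ℤ) - 1) = (τ + -(k : ℤ)) - 1 := by ring
      rw [e3, e4, key, ih]
  intro t τ
  have h1 := hk (-τ) t τ
  have e1 : t + -τ = t - τ := by ring
  have e2 : τ + -τ = 0 := by ring
  rw [e1, e2] at h1
  rw [← h1, real_inner_comm]


end Aux

section TA
variable {H : Type*} [NormedAddCommGroup H] [InnerProductSpace ℝ H] [CompleteSpace H]
variable {p : ℕ}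

lemma e2p_inner_right (f : Ell2p p) (i : ℤ × Fin p) : ⟪f, e2p p i⟫_ℝ = f i := by
  rw [e2p, lp.inner_single_right]
  simp [RCLike.inner_apply]

lemma e2p_inner_left (f : Ell2p p) (i : ℤ × Fin p) : ⟪e2p p i, f⟫_ℝ = f i := by
  rw [e2p, lp.inner_single_left]
  simp [RCLike.inner_apply]

lemma e2p_inner_e2p (i j : ℤ × Fin p) : ⟪e2p p i, e2p p j⟫_ℝ = if i = j then 1 else 0 := by
  rw [e2p_inner_left, e2p, lp.single_apply]
  simp [eq_comm]
  rw [Pi.single_apply]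

lemma inner_eq_tsum_real (f g : Ell2p p) : ⟪f, g⟫_ℝ = ∑' i, f i * g i := by
  rw [lp.inner_eq_tsum]
  simp [RCLike.inner_apply]
  exact tsum_congr fun i => mul_comm _ _

lemma norm_sum_e2p (c : ℤ × Fin p → ℝ) (F : Finset (ℤ × Fin p)) :
    ‖∑ i ∈ F, c i • e2p p i‖ ^ 2 = ∑ i ∈ F, (c i) ^ 2 := by
  rw [← real_inner_self_eq_norm_sq, sum_inner]
  refine Finset.sum_congr rfl fun i hi => ?_
  have hterm : ∀ j, ⟪c i • e2p p i, c j • e2p p j⟫_ℝ = if j = i then c i ^ 2 else 0 := by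
    intro j
    rw [real_inner_smul_left, real_inner_smul_right, e2p_inner_e2p]
    by_cases h : j = i
    · subst h; simp [sq]
    · simp [h, Ne.symm h]
  rw [inner_sum]
  simp only [hterm]
  rw [Finset.sum_ite_eq' F i fun _ => c i ^ 2, if_pos hi]


variable (x : ℤ × Fin p → H) (C : Ell2p p →L[ℝ] Ell2p p)

lemma quad_eq (hC : ∀ i j : ℤ × Fin p, ⟪C (e2p p j), e2p p i⟫_ℝ = ⟪x i, x j⟫_ℝ)
    (c : ℤ × Fin p → ℝ) (F : Finset (ℤ × Fin p)) :
    ‖∑ i ∈ F, c i • x i‖ ^ 2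
      = ⟪C (∑ i ∈ F, c i • e2p p i), ∑ i ∈ F, c i • e2p p i⟫_ℝ := by
  rw [← real_inner_self_eq_norm_sq, map_sum, sum_inner, sum_inner]
  refine Finset.sum_congr rfl fun j hj => ?_
  rw [inner_sum, inner_sum]
  refine Finset.sum_congr rfl fun i hi => ?_
  rw [map_smul, real_inner_smul_left, real_inner_smul_left, real_inner_smul_right,
    real_inner_smul_right, hC]
  rw [real_inner_comm (x i) (x j)]

lemma quad_le (hC : ∀ i j : ℤ × Fin p, ⟪C (e2p p j), e2p p i⟫_ℝ = ⟪x i, x j⟫_ℝ)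
    {lamSup : ℝ} (hhi : ∀ v : Ell2p p, ⟪C v, v⟫_ℝ ≤ lamSup * ‖v‖ ^ 2)
    (c : ℤ × Fin p → ℝ) (F : Finset (ℤ × Fin p)) :
    ‖∑ i ∈ F, c i • x i‖ ^ 2 ≤ lamSup * ∑ i ∈ F, (c i) ^ 2 := by
  rw [quad_eq x C hC c F, ← norm_sum_e2p c F]
  exact hhi _

lemma summable_coef (hC : ∀ i j : ℤ × Fin p, ⟪C (e2p p j), e2p p i⟫_ℝ = ⟪x i, x j⟫_ℝ)
    {lamSup : ℝ} (hhi : ∀ v : Ell2p p, ⟪C v, v⟫_ℝ ≤ lamSup * ‖v‖ ^ 2) (hS0 : 0 < lamSup)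
    (u : Ell2p p) : Summable fun i => u i • x i := by
  rw [summable_iff_vanishing_norm]
  intro ε hε
  have hsq : Summable fun i => ‖u i‖ ^ 2 := by
    have h0 : ((2 : ℝ≥0∞).toReal) = (2 : ℝ) := by norm_num
    have := (lp.memℓp u).summable (p := (2 : ℝ≥0∞)) (by rw [h0]; norm_num)
    rw [h0] at this
    have h1 : ∀ i : ℤ × Fin p, ‖u i‖ ^ (2 : ℝ) = ‖u i‖ ^ (2 : ℕ) := fun i => by
      rw [show ((2 : ℝ)) = ((2 : ℕ) : ℝ) by norm_num, Real.rpow_natCast]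
    simpa only [h1] using this
  have hv := summable_iff_vanishing_norm.1 hsq
  obtain ⟨s, hs⟩ := hv (ε ^ 2 / lamSup) (by positivity)
  refine ⟨s, fun t ht => ?_⟩
  have h1 : ‖∑ i ∈ t, u i • x i‖ ^ 2 ≤ lamSup * ∑ i ∈ t, (u i) ^ 2 :=
    quad_le x C hC hhi (fun i => u i) t
  have h2 : ∑ i ∈ t, (u i) ^ 2 < ε ^ 2 / lamSup := by
    have := hs t ht
    have hn : ∑ i ∈ t, ‖u i‖ ^ 2 = ∑ i ∈ t, (u i) ^ 2 := by
      refine Finset.sum_congr rfl fun i _ => by rw [Real.norm_eq_abs, sq_abs]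
    calc ∑ i ∈ t, (u i) ^ 2 = ∑ i ∈ t, ‖u i‖ ^ 2 := hn.symm
      _ ≤ ‖∑ i ∈ t, ‖u i‖ ^ 2‖ := le_abs_self _
      _ < ε ^ 2 / lamSup := this
  have h3 : ‖∑ i ∈ t, u i • x i‖ ^ 2 < ε ^ 2 := by
    calc ‖∑ i ∈ t, u i • x i‖ ^ 2 ≤ lamSup * ∑ i ∈ t, (u i) ^ 2 := h1
      _ < lamSup * (ε ^ 2 / lamSup) := by
          exact (mul_lt_mul_iff_right₀ hS0).2 h2
      _ = ε ^ 2 := by field_simp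
  nlinarith [norm_nonneg (∑ i ∈ t, u i • x i)]


def Tf (u : Ell2p p) : H := ∑' i, u i • x i

variable {x C}

lemma Tf_inner (hsum : ∀ u : Ell2p p, Summable fun i => u i • x i)
    (u : Ell2p p) (h : H) : ⟪h, Tf x u⟫_ℝ = ∑' i, u i * ⟪h, x i⟫_ℝ := by
  have h1 : HasSum (fun i => ⟪h, u i • x i⟫_ℝ) ⟪h, Tf x u⟫_ℝ :=
    (hsum u).hasSum.mapL (innerSL ℝ h)
  have h2 : ∀ i, ⟪h, u i • x i⟫_ℝ = u i * ⟪h, x i⟫_ℝ := fun i => real_inner_smul_right _ _ _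
  rw [← h1.tsum_eq]
  exact tsum_congr h2

lemma Tf_inner_left (hsum : ∀ u : Ell2p p, Summable fun i => u i • x i)
    (u : Ell2p p) (h : H) : ⟪Tf x u, h⟫_ℝ = ∑' i, u i * ⟪x i, h⟫_ℝ := by
  rw [real_inner_comm, Tf_inner hsum]
  exact tsum_congr fun i => by rw [real_inner_comm]

lemma Tf_x_inner (hC : ∀ i j : ℤ × Fin p, ⟪C (e2p p j), e2p p i⟫_ℝ = ⟪x i, x j⟫_ℝ)
    (hCsa : ∀ u v : Ell2p p, ⟪C u, v⟫_ℝ = ⟪u, C v⟫_ℝ)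
    (hsum : ∀ u : Ell2p p, Summable fun i => u i • x i)
    (u : Ell2p p) (j : ℤ × Fin p) : ⟪Tf x u, x j⟫_ℝ = ⟪C u, e2p p j⟫_ℝ := by
  rw [Tf_inner_left hsum, hCsa u (e2p p j), inner_eq_tsum_real]
  refine tsum_congr fun i => ?_
  rw [← hC i j, e2p_inner_right]

lemma Tf_Tf (hC : ∀ i j : ℤ × Fin p, ⟪C (e2p p j), e2p p i⟫_ℝ = ⟪x i, x j⟫_ℝ)
    (hCsa : ∀ u v : Ell2p p, ⟪C u, v⟫_ℝ = ⟪u, C v⟫_ℝ)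
    (hsum : ∀ u : Ell2p p, Summable fun i => u i • x i)
    (u v : Ell2p p) : ⟪Tf x u, Tf x v⟫_ℝ = ⟪C u, v⟫_ℝ := by
  rw [Tf_inner hsum v (Tf x u)]
  have h1 : ∀ i, ⟪Tf x u, x i⟫_ℝ = ⟪C u, e2p p i⟫_ℝ := Tf_x_inner hC hCsa hsum u
  calc (∑' i, v i * ⟪Tf x u, x i⟫_ℝ) = ∑' i, v i * (C u) i := by
        refine tsum_congr fun i => ?_
        rw [h1 i, e2p_inner_right]
    _ = ⟪v, C u⟫_ℝ := (inner_eq_tsum_real v (C u)).symm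
    _ = ⟪C u, v⟫_ℝ := real_inner_comm _ _

lemma Tf_single (hsum : ∀ u : Ell2p p, Summable fun i => u i • x i) (j : ℤ × Fin p) :
    Tf x (e2p p j) = x j := by
  rw [Tf]
  rw [tsum_eq_single j]
  · rw [e2p, lp.single_apply_self, one_smul]
  · intro i hij
    rw [e2p, lp.single_apply_ne 2 j 1 hij, zero_smul]

lemma Tf_sub (hsum : ∀ u : Ell2p p, Summable fun i => u i • x i) (u v : Ell2p p) :
    Tf x (u - v) = Tf x u - Tf x v := by
  rw [Tf, Tf, Tf, ← Summable.tsum_sub (hsum u) (hsum v)]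
  refine tsum_congr fun i => ?_
  rw [lp.coeFn_sub, Pi.sub_apply, sub_smul]

lemma Tf_smul (hsum : ∀ u : Ell2p p, Summable fun i => u i • x i) (c : ℝ) (u : Ell2p p) :
    Tf x (c • u) = c • Tf x u := by
  rw [Tf, Tf, ← Summable.tsum_const_smul c (hsum u)]
  refine tsum_congr fun i => ?_
  rw [lp.coeFn_smul, Pi.smul_apply, smul_smul]
  norm_num

lemma Tf_zero : Tf (p := p) x 0 = 0 := by
  rw [Tf]
  have : ∀ i : ℤ × Fin p, ((0 : Ell2p p) : ∀ i, ℝ) i • x i = 0 := by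
    intro i
    rw [lp.coeFn_zero]
    simp
  rw [tsum_congr this, tsum_zero]

lemma Tf_add (hsum : ∀ u : Ell2p p, Summable fun i => u i • x i) (u v : Ell2p p) :
    Tf x (u + v) = Tf x u + Tf x v := by
  rw [Tf, Tf, Tf, ← Summable.tsum_add (hsum u) (hsum v)]
  refine tsum_congr fun i => ?_
  rw [lp.coeFn_add, Pi.add_apply, add_smul]

lemma Tf_finsum (hsum : ∀ u : Ell2p p, Summable fun i => u i • x i)
    {ι : Type*} (F : Finset ι) (g : ι → Ell2p p) :
    Tf x (∑ i ∈ F, g i) = ∑ i ∈ F, Tf x (g i) := by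
  classical
  induction F using Finset.induction_on with
  | empty => simpa using Tf_zero
  | insert _ _ hnotmem ih =>
    rw [Finset.sum_insert hnotmem, Finset.sum_insert hnotmem, Tf_add hsum, ih]

lemma Tf_norm_sq (hC : ∀ i j : ℤ × Fin p, ⟪C (e2p p j), e2p p i⟫_ℝ = ⟪x i, x j⟫_ℝ)
    (hCsa : ∀ u v : Ell2p p, ⟪C u, v⟫_ℝ = ⟪u, C v⟫_ℝ)
    (hsum : ∀ u : Ell2p p, Summable fun i => u i • x i) (u : Ell2p p) :
    ‖Tf x u‖ ^ 2 = ⟪C u, u⟫_ℝ := by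
  rw [← real_inner_self_eq_norm_sq, Tf_Tf hC hCsa hsum]

lemma isClosed_range_Tf {lamInf lamSup : ℝ}
    (hC : ∀ i j : ℤ × Fin p, ⟪C (e2p p j), e2p p i⟫_ℝ = ⟪x i, x j⟫_ℝ)
    (hCsa : ∀ u v : Ell2p p, ⟪C u, v⟫_ℝ = ⟪u, C v⟫_ℝ)
    (hsum : ∀ u : Ell2p p, Summable fun i => u i • x i)
    (hlo : ∀ v : Ell2p p, lamInf * ‖v‖ ^ 2 ≤ ⟪C v, v⟫_ℝ)
    (hhi : ∀ v : Ell2p p, ⟪C v, v⟫_ℝ ≤ lamSup * ‖v‖ ^ 2)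
    (hpos : 0 < lamInf) (hS0 : (0:ℝ) ≤ lamSup) :
    IsClosed (Set.range (Tf x : Ell2p p → H)) := by
  have hub : ∀ u : Ell2p p, ‖Tf x u‖ ≤ Real.sqrt lamSup * ‖u‖ := by
    intro u
    have h1 : ‖Tf x u‖ ^ 2 ≤ lamSup * ‖u‖ ^ 2 := by
      rw [Tf_norm_sq hC hCsa hsum]; exact hhi u
    have h2 : ‖Tf x u‖ = Real.sqrt (‖Tf x u‖ ^ 2) := (Real.sqrt_sq (norm_nonneg _)).symm
    rw [h2]
    calc Real.sqrt (‖Tf x u‖ ^ 2) ≤ Real.sqrt (lamSup * ‖u‖ ^ 2) := Real.sqrt_le_sqrt h1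
      _ = Real.sqrt lamSup * ‖u‖ := by
          rw [Real.sqrt_mul hS0, Real.sqrt_sq (norm_nonneg _)]
  have hlb : ∀ u : Ell2p p, Real.sqrt lamInf * ‖u‖ ≤ ‖Tf x u‖ := by
    intro u
    have h1 : lamInf * ‖u‖ ^ 2 ≤ ‖Tf x u‖ ^ 2 := by
      rw [Tf_norm_sq hC hCsa hsum]; exact hlo u
    have h2 : ‖Tf x u‖ = Real.sqrt (‖Tf x u‖ ^ 2) := (Real.sqrt_sq (norm_nonneg _)).symm
    rw [h2]
    calc Real.sqrt lamInf * ‖u‖ = Real.sqrt (lamInf * ‖u‖ ^ 2) := by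
          rw [Real.sqrt_mul hpos.le, Real.sqrt_sq (norm_nonneg _)]
      _ ≤ Real.sqrt (‖Tf x u‖ ^ 2) := Real.sqrt_le_sqrt h1
  have hdist : ∀ u v : Ell2p p, dist (Tf x u) (Tf x v) = ‖Tf x (u - v)‖ := by
    intro u v
    rw [dist_eq_norm, Tf_sub hsum]
  have hlip : LipschitzWith (Real.toNNReal (Real.sqrt lamSup)) (Tf x : Ell2p p → H) := by
    refine LipschitzWith.of_dist_le_mul fun u v => ?_
    rw [hdist]
    calc ‖Tf x (u - v)‖ ≤ Real.sqrt lamSup * ‖u - v‖ := hub _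
      _ = Real.toNNReal (Real.sqrt lamSup) * dist u v := by
          rw [dist_eq_norm, Real.coe_toNNReal _ (Real.sqrt_nonneg _)]
  have halip : AntilipschitzWith (Real.toNNReal (Real.sqrt lamInf)⁻¹) (Tf x : Ell2p p → H) := by
    refine AntilipschitzWith.of_le_mul_dist fun u v => ?_
    rw [hdist, dist_eq_norm]
    have h3 : Real.sqrt lamInf * ‖u - v‖ ≤ ‖Tf x (u - v)‖ := hlb _
    have h4 : (0:ℝ) < Real.sqrt lamInf := Real.sqrt_pos.2 hpos
    rw [Real.coe_toNNReal _ (by positivity)]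
    have h5 : (Real.sqrt lamInf)⁻¹ * (Real.sqrt lamInf * ‖u - v‖)
        ≤ (Real.sqrt lamInf)⁻¹ * ‖Tf x (u - v)‖ :=
      mul_le_mul_of_nonneg_left h3 (by positivity)
    rwa [inv_mul_cancel_left₀ h4.ne' _] at h5
  exact halip.isClosed_range hlip.uniformContinuous

lemma closure_span_range_x_subset {lamInf lamSup : ℝ}
    (hC : ∀ i j : ℤ × Fin p, ⟪C (e2p p j), e2p p i⟫_ℝ = ⟪x i, x j⟫_ℝ)
    (hCsa : ∀ u v : Ell2p p, ⟪C u, v⟫_ℝ = ⟪u, C v⟫_ℝ)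
    (hsum : ∀ u : Ell2p p, Summable fun i => u i • x i)
    (hlo : ∀ v : Ell2p p, lamInf * ‖v‖ ^ 2 ≤ ⟪C v, v⟫_ℝ)
    (hhi : ∀ v : Ell2p p, ⟪C v, v⟫_ℝ ≤ lamSup * ‖v‖ ^ 2)
    (hpos : 0 < lamInf) (hS0 : (0:ℝ) ≤ lamSup) :
    ((Submodule.span ℝ (Set.range x)).topologicalClosure : Set H)
      ⊆ Set.range (Tf x : Ell2p p → H) := by
  have hsub : (Submodule.span ℝ (Set.range x) : Set H) ⊆ Set.range (Tf x : Ell2p p → H) := by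
    intro w hw
    obtain ⟨c, hc⟩ := Finsupp.mem_span_range_iff_exists_finsupp.1 hw
    refine ⟨∑ j ∈ c.support, c j • e2p p j, ?_⟩
    rw [Tf_finsum hsum]
    rw [← hc]
    rw [Finsupp.sum]
    refine Finset.sum_congr rfl fun j _ => ?_
    rw [Tf_smul hsum, Tf_single hsum]
  have hcl : ((Submodule.span ℝ (Set.range x)).topologicalClosure : Set H)
      = closure (Submodule.span ℝ (Set.range x) : Set H) := rfl
  rw [hcl]
  exact closure_minimal hsub (isClosed_range_Tf hC hCsa hsum hlo hhi hpos hS0)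


lemma Tf_continuous {lamSup : ℝ}
    (hC : ∀ i j : ℤ × Fin p, ⟪C (e2p p j), e2p p i⟫_ℝ = ⟪x i, x j⟫_ℝ)
    (hCsa : ∀ u v : Ell2p p, ⟪C u, v⟫_ℝ = ⟪u, C v⟫_ℝ)
    (hsum : ∀ u : Ell2p p, Summable fun i => u i • x i)
    (hhi : ∀ v : Ell2p p, ⟪C v, v⟫_ℝ ≤ lamSup * ‖v‖ ^ 2) (hS0 : (0:ℝ) ≤ lamSup) :
    Continuous (Tf x : Ell2p p → H) := by
  have hub : ∀ u : Ell2p p, ‖Tf x u‖ ≤ Real.sqrt lamSup * ‖u‖ := by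
    intro u
    have h1 : ‖Tf x u‖ ^ 2 ≤ lamSup * ‖u‖ ^ 2 := by
      rw [Tf_norm_sq hC hCsa hsum]; exact hhi u
    have h2 : ‖Tf x u‖ = Real.sqrt (‖Tf x u‖ ^ 2) := (Real.sqrt_sq (norm_nonneg _)).symm
    rw [h2]
    calc Real.sqrt (‖Tf x u‖ ^ 2) ≤ Real.sqrt (lamSup * ‖u‖ ^ 2) := Real.sqrt_le_sqrt h1
      _ = Real.sqrt lamSup * ‖u‖ := by
          rw [Real.sqrt_mul hS0, Real.sqrt_sq (norm_nonneg _)]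
  have hlip : LipschitzWith (Real.toNNReal (Real.sqrt lamSup)) (Tf x : Ell2p p → H) := by
    refine LipschitzWith.of_dist_le_mul fun u v => ?_
    rw [dist_eq_norm, ← Tf_sub hsum]
    calc ‖Tf x (u - v)‖ ≤ Real.sqrt lamSup * ‖u - v‖ := hub _
      _ = Real.toNNReal (Real.sqrt lamSup) * dist u v := by
          rw [dist_eq_norm, Real.coe_toNNReal _ (Real.sqrt_nonneg _)]
  exact hlip.continuous


end TA

/-- **Theorem 2.2(ii).** `D_{a,a}` is Toeplitz iff the nodal time-series
partial covariances are shift invariant. -/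
theorem statement_10
    {H : Type*} [NormedAddCommGroup H] [InnerProductSpace ℝ H] [CompleteSpace H]
    (p : ℕ) (hp : 1 ≤ p) (x : ℤ × Fin p → H)
    (lamInf lamSup : ℝ)
    (hInf : IsGLB (gramQuadSet x) lamInf)
    (hSup : IsLUB (gramQuadSet x) lamSup)
    (hpos : 0 < lamInf)
    (C : Ell2p p →L[ℝ] Ell2p p)
    (hC : ∀ i j : ℤ × Fin p, ⟪C (e2p p j), e2p p i⟫_ℝ = ⟪x i, x j⟫_ℝ)
    (hCsa : ∀ u v : Ell2p p, ⟪C u, v⟫_ℝ = ⟪u, C v⟫_ℝ)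
    (hlo : ∀ v : Ell2p p, lamInf * ‖v‖ ^ 2 ≤ ⟪C v, v⟫_ℝ)
    (hhi : ∀ v : Ell2p p, ⟪C v, v⟫_ℝ ≤ lamSup * ‖v‖ ^ 2)
    (D : Ell2p p →L[ℝ] Ell2p p)
    (hCD : C.comp D = ContinuousLinearMap.id ℝ (Ell2p p))
    (hDC : D.comp C = ContinuousLinearMap.id ℝ (Ell2p p))
    (a : Fin p)
    (ra : ℤ → H)
    (hra : ∀ t : ℤ, IsResidual (x '' {k : ℤ × Fin p | k.2 ≠ a}) (x (t, a)) (ra t)) :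
    (∀ t τ : ℤ, ⟪D (e2p p (τ, a)), e2p p (t, a)⟫_ℝ =
        ⟪D (e2p p (τ + 1, a)), e2p p (t + 1, a)⟫_ℝ) ↔
    (∀ t τ : ℤ, ⟪ra t, ra τ⟫_ℝ = ⟪ra 0, ra (t - τ)⟫_ℝ) := by
  classical
  -- positivity of lamSup
  have hi0 : (0:ℤ) = 0 := rfl
  set i0 : ℤ × Fin p := ((0:ℤ), ⟨0, hp⟩) with hi0def
  have hnorm1 : ‖e2p p i0‖ ^ 2 = 1 := by
    have h := norm_sum_e2p (p := p) (fun _ => (1:ℝ)) {i0}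
    simpa using h
  have hS0' : lamInf ≤ lamSup := by
    have h1 := hlo (e2p p i0)
    have h2 := hhi (e2p p i0)
    rw [hnorm1] at h1 h2
    linarith
  have hSpos : (0:ℝ) < lamSup := lt_of_lt_of_le hpos hS0'
  have hS0 : (0:ℝ) ≤ lamSup := hSpos.le
  have hsum : ∀ u : Ell2p p, Summable fun i => u i • x i :=
    summable_coef x C hC hhi hSpos
  have hCD' : ∀ v : Ell2p p, C (D v) = v := by
    intro v
    have := ContinuousLinearMap.ext_iff.1 hCD v
    simpa using this
  have hDC' : ∀ v : Ell2p p, D (C v) = v := by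
    intro v
    have := ContinuousLinearMap.ext_iff.1 hDC v
    simpa using this
  -- the dual family
  set Y : ℤ → H := fun t => Tf x (D (e2p p (t, a))) with hYdef
  have hYx : ∀ (t : ℤ) (j : ℤ × Fin p), ⟪Y t, x j⟫_ℝ = if (t, a) = j then 1 else 0 := by
    intro t j
    show ⟪Tf x (D (e2p p (t, a))), x j⟫_ℝ = _
    rw [Tf_x_inner hC hCsa hsum, hCD' (e2p p (t, a)), e2p_inner_e2p]
  have hYY : ∀ t τ : ℤ, ⟪Y t, Y τ⟫_ℝ = ⟪D (e2p p (τ, a)), e2p p (t, a)⟫_ℝ := by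
    intro t τ
    show ⟪Tf x (D (e2p p (t, a))), Tf x (D (e2p p (τ, a)))⟫_ℝ = _
    rw [Tf_Tf hC hCsa hsum, hCD' (e2p p (t, a)), real_inner_comm]
  set Sset : Set H := x '' {k : ℤ × Fin p | k.2 ≠ a} with hSsetdef
  set N : Submodule ℝ H := (Submodule.span ℝ Sset).topologicalClosure with hNdef
  have hYorthN : ∀ t : ℤ, ∀ z ∈ N, ⟪Y t, z⟫_ℝ = 0 := by
    intro t
    apply orth_closure
    rintro z ⟨k, hk, rfl⟩
    rw [hYx t k, if_neg]
    intro h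
    apply hk
    rw [← h]
  have hraorthN : ∀ t : ℤ, ∀ z ∈ N, ⟪ra t, z⟫_ℝ = 0 := by
    intro t
    apply orth_closure
    exact (hra t).2
  have hbi : ∀ s t : ℤ, ⟪Y s, ra t⟫_ℝ = if s = t then 1 else 0 := by
    intro s t
    have hmemN : x (t, a) - ra t ∈ N := (hra t).1
    have h1 : ⟪Y s, ra t⟫_ℝ = ⟪Y s, x (t, a)⟫_ℝ - ⟪Y s, x (t, a) - ra t⟫_ℝ := by
      rw [← inner_sub_right, sub_sub_cancel]
    rw [h1, hYorthN s _ hmemN, sub_zero, hYx s (t, a)]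
    by_cases h : s = t
    · subst h; simp
    · rw [if_neg, if_neg h]
      intro hc
      exact h (congrArg Prod.fst hc)
  -- residuals lie in the closed span of the dual family
  have hNsubrange : (N : Set H) ⊆ Set.range (Tf x : Ell2p p → H) := by
    have hmono : N ≤ (Submodule.span ℝ (Set.range x)).topologicalClosure := by
      apply Submodule.topologicalClosure_mono
      apply Submodule.span_mono
      exact Set.image_subset_range _ _
    intro m hm
    exact closure_span_range_x_subset hC hCsa hsum hlo hhi hpos hS0 (hmono hm)
  have hsingle_smul : ∀ (g : Ell2p p) (j : ℤ × Fin p),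
      lp.single 2 j (g j) = g j • e2p p j := by
    intro g j
    rw [e2p]
    have := lp.single_smul (E := fun _ : ℤ × Fin p => ℝ) 2 j (g j) (1 : ℝ)
    rw [← this]
    norm_num
  have hraM : ∀ t : ℤ, ra t ∈ (Submodule.span ℝ (Set.range Y)).topologicalClosure := by
    intro t
    obtain ⟨v, hv⟩ := hNsubrange (hra t).1
    set u : Ell2p p := e2p p (t, a) - v with hu
    have hTfu : Tf x u = ra t := by
      rw [hu, Tf_sub hsum, Tf_single hsum, hv, sub_sub_cancel]
    set g : Ell2p p := C u with hg
    have hgj : ∀ j : ℤ × Fin p, j.2 ≠ a → g j = 0 := by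
      intro j hj
      have h1 : ⟪Tf x u, x j⟫_ℝ = ⟪C u, e2p p j⟫_ℝ := Tf_x_inner hC hCsa hsum u j
      rw [hTfu] at h1
      have h2 : ⟪ra t, x j⟫_ℝ = 0 := (hra t).2 (x j) ⟨j, hj, rfl⟩
      have h3 : ⟪C u, e2p p j⟫_ℝ = 0 := by rw [← h1, h2]
      rw [e2p_inner_right] at h3
      exact h3
    have hDg : D g = u := by rw [hg, hDC' u]
    have hhs : HasSum (fun j => lp.single 2 j (g j)) g :=
      lp.hasSum_single (by norm_num) g
    have hTcont : Continuous (Tf x : Ell2p p → H) := Tf_continuous hC hCsa hsum hhi hS0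
    have hts : Filter.Tendsto
        (fun F : Finset (ℤ × Fin p) => Tf x (D (∑ j ∈ F, lp.single 2 j (g j))))
        Filter.atTop (nhds (Tf x (D g))) :=
      ((hTcont.comp D.continuous).tendsto g).comp hhs
    rw [hDg, hTfu] at hts
    refine mem_closure_of_tendsto hts (Filter.Eventually.of_forall fun F => ?_)
    have hexp : Tf x (D (∑ j ∈ F, lp.single 2 j (g j)))
        = ∑ j ∈ F, g j • Tf x (D (e2p p j)) := by
      rw [map_sum, Tf_finsum hsum]
      refine Finset.sum_congr rfl fun j _ => ?_
      rw [hsingle_smul g j, map_smul, Tf_smul hsum]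
    rw [hexp]
    refine Submodule.sum_mem _ fun j _ => ?_
    by_cases hja : j.2 = a
    · have hjeq : j = (j.1, a) := by
        rw [← hja]
      rw [hjeq]
      exact Submodule.smul_mem _ _ (Submodule.subset_span ⟨j.1, rfl⟩)
    · rw [hgj j hja, zero_smul]
      exact Submodule.zero_mem _
  -- the dual family lies in the closed span of the residuals
  haveI : CompleteSpace N := IsComplete.completeSpace_coe
    (Submodule.isClosed_topologicalClosure _).isComplete
  set Mr : Submodule ℝ H := (Submodule.span ℝ (Set.range ra)).topologicalClosure with hMrdef
  set Qc : H →L[ℝ] H :=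
    ContinuousLinearMap.id ℝ H - N.subtypeL.comp (N.orthogonalProjectionOnto) with hQcdef
  have hQapp : ∀ w : H, Qc w = w - (N.orthogonalProjectionOnto w : H) := fun w => rfl
  have hQra : ∀ s : ℤ, Qc (x (s, a)) = ra s := by
    intro s
    have h1 : (N.orthogonalProjectionOnto (x (s, a)) : H) = x (s, a) - ra s := by
      refine Submodule.eq_starProjection_of_mem_of_inner_eq_zero (hra s).1 fun w hw => ?_
      rw [sub_sub_cancel]
      exact hraorthN s w hw
    rw [hQapp, h1, sub_sub_cancel]
  have hQ0 : ∀ j : ℤ × Fin p, j.2 ≠ a → Qc (x j) = 0 := by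
    intro j hj
    have hxN : x j ∈ N :=
      Submodule.le_topologicalClosure _ (Submodule.subset_span ⟨j, hj, rfl⟩)
    have h1 : (N.orthogonalProjectionOnto (x j) : H) = x j := by
      refine Submodule.eq_starProjection_of_mem_of_inner_eq_zero hxN fun w hw => ?_
      rw [sub_self]
      exact inner_zero_left w
    rw [hQapp, h1, sub_self]
  have hcomap : (Submodule.span ℝ (Set.range x)).topologicalClosure
      ≤ Submodule.comap (Qc : H →ₗ[ℝ] H) Mr := by
    apply Submodule.topologicalClosure_minimal
    · rw [Submodule.span_le]
      rintro w ⟨j, rfl⟩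
      show x j ∈ Submodule.comap (Qc : H →ₗ[ℝ] H) Mr
      rw [Submodule.mem_comap, ContinuousLinearMap.coe_coe]
      by_cases hja : j.2 = a
      · have hjeq : j = (j.1, a) := by rw [← hja]
        rw [hjeq, hQra j.1]
        exact Submodule.le_topologicalClosure _ (Submodule.subset_span ⟨j.1, rfl⟩)
      · rw [hQ0 j hja]
        exact Submodule.zero_mem _
    · have hset : (Submodule.comap (Qc : H →ₗ[ℝ] H) Mr : Set H) = Qc ⁻¹' (Mr : Set H) := rfl
      have : IsClosed (Qc ⁻¹' (Mr : Set H)) :=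
        (Submodule.isClosed_topologicalClosure _).preimage Qc.continuous
      rw [← hset] at this
      exact this
  have hYE : ∀ t : ℤ, Y t ∈ (Submodule.span ℝ (Set.range x)).topologicalClosure := by
    intro t
    have hhs : HasSum (fun i => (D (e2p p (t, a))) i • x i) (Y t) := (hsum _).hasSum
    refine mem_closure_of_tendsto hhs (Filter.Eventually.of_forall fun F => ?_)
    exact Submodule.sum_mem _ fun i _ =>
      Submodule.smul_mem _ _ (Submodule.subset_span ⟨i, rfl⟩)
  have hYMr : ∀ t : ℤ, Y t ∈ Mr := by
    intro t
    have h1 := hcomap (hYE t)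
    rw [Submodule.mem_comap] at h1
    have h2 : (N.orthogonalProjectionOnto (Y t) : H) = 0 := by
      refine Submodule.eq_starProjection_of_mem_of_inner_eq_zero (Submodule.zero_mem N)
        fun w hw => ?_
      rw [sub_zero]
      exact hYorthN t w hw
    have h3 : Qc (Y t) = Y t := by rw [hQapp, h2, sub_zero]
    rw [← h3]; exact h1
  constructor
  · intro hT
    have hYshift : ∀ t τ : ℤ, ⟪Y t, Y τ⟫_ℝ = ⟪Y (t + 1), Y (τ + 1)⟫_ℝ := by
      intro t τ
      rw [hYY, hYY, hT]
    exact aux_shift_all ra (aux_shift Y ra hYshift hbi hraM)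
  · intro hR
    have hrshift : ∀ t τ : ℤ, ⟪ra t, ra τ⟫_ℝ = ⟪ra (t + 1), ra (τ + 1)⟫_ℝ := by
      intro t τ
      rw [hR t τ, hR (t + 1) (τ + 1)]
      have he : t + 1 - (τ + 1) = t - τ := by ring
      rw [he]
    have hbi' : ∀ s t : ℤ, ⟪ra s, Y t⟫_ℝ = if s = t then 1 else 0 := by
      intro s t
      rw [real_inner_comm, hbi t s]
      by_cases h : s = t
      · subst h; simp
      · rw [if_neg (Ne.symm h), if_neg h]
    have hY2 := aux_shift ra Y hrshift hbi' hYMr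
    intro t τ
    rw [← hYY t τ, ← hYY (t + 1) (τ + 1)]
    exact hY2 t τ
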